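/- QDESA correctness (full steady-state reconstruction): if the (ℓ+1)×(ℓ+1) matrix S δ_0 − B^0 is invertible (here S δ_0 is the matrix whose column 0 equals the column vector S and whose other columns are zero), then for every m with 0 ≤ m ≤ M, π^m = δ_0 (S δ_0 − B^0)^{−1} R_1 R_2 ⋯ R_m (the empty product for m = 0 being the identity matrix). -/
import Mathlib

open Matrix

theorem stmt_8
    (M l : ℕ) (hM : 1 ≤ M)
    (Q : Matrix (Fin (M+1) × Fin (l+1)) (Fin (M+1) × Fin (l+1)) ℝ)
    (htri : ∀ (m n : Fin (M+1)) (i j : Fin (l+1)),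
      1 < |(m.val : ℤ) - (n.val : ℤ)| → Q (m, i) (n, j) = 0)
    (hrow : ∀ s, ∑ t, Q s t = 0)
    (W U D : ℕ → Matrix (Fin (l+1)) (Fin (l+1)) ℝ)
    (hW : ∀ (m : ℕ) (hm : m ≤ M) (i j : Fin (l+1)),
      W m i j = Q (⟨m, by omega⟩, i) (⟨m, by omega⟩, j))
    (hU : ∀ (m : ℕ) (hm : m < M) (i j : Fin (l+1)),
      U m i j = Q (⟨m, by omega⟩, i) (⟨m+1, by omega⟩, j))
    (hD : ∀ (m : ℕ) (hm1 : 1 ≤ m) (hm2 : m ≤ M) (i j : Fin (l+1)),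
      D m i j = Q (⟨m, by omega⟩, i) (⟨m-1, by omega⟩, j))
    (hDES : ∀ (m : ℕ), 1 ≤ m → m ≤ M → ∀ (i j : Fin (l+1)), j ≠ 0 → D m i j = 0)
    (Ut : ℕ → Matrix (Fin (l+1)) (Fin (l+1)) ℝ)
    (hUt : ∀ (m : ℕ), m < M → ∀ (i j : Fin (l+1)),
      Ut m i j = if j = 0 then ∑ k, U m i k else 0)
    (hUtM : Ut M = 0)
    (B : ℕ → Matrix (Fin (l+1)) (Fin (l+1)) ℝ)
    (hB : ∀ (m : ℕ), m ≤ M → B m = W m + Ut m)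
    (π : Fin (M+1) × Fin (l+1) → ℝ)
    (hπ : Matrix.vecMul π Q = 0)
    (hBinv : ∀ (m : ℕ), 1 ≤ m → m ≤ M → IsUnit (B m))
    (R : ℕ → Matrix (Fin (l+1)) (Fin (l+1)) ℝ)
    (hR : ∀ (m : ℕ), 1 ≤ m → m ≤ M → R m = -(U (m-1) * (B m)⁻¹))
    (S : Fin (l+1) → ℝ)
    (hS : ∀ i, S i = 1 + ∑ m ∈ Finset.Icc 1 M, ∑ j, (((List.range' 1 m).map R).prod) i j)
    (hnorm : ∑ s, π s = 1)
    (hinv : IsUnit (Matrix.vecMulVec S (fun j => if j = (0 : Fin (l+1)) then (1:ℝ) else 0) - B 0)) :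
    ∀ (m : ℕ) (hm : m ≤ M),
      (fun i => π (⟨m, by omega⟩, i))
        = Matrix.vecMul (fun j => if j = (0 : Fin (l+1)) then (1:ℝ) else 0)
            ((Matrix.vecMulVec S (fun j => if j = (0 : Fin (l+1)) then (1:ℝ) else 0) - B 0)⁻¹
              * ((List.range' 1 m).map R).prod) := by
  classical
  set e : Fin (l+1) → ℝ := fun j => if j = (0 : Fin (l+1)) then (1:ℝ) else 0 with he
  set πv : ℕ → Fin (l+1) → ℝ :=
    fun m i => if h : m ≤ M then π (⟨m, by omega⟩, i) else 0 with hπv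
  have πv_eq : ∀ (m : ℕ) (h : m ≤ M) (i : Fin (l+1)),
      πv m i = π (⟨m, by omega⟩, i) := by
    intro m h i; simp [hπv, h]
  -- generic three-point reduction of a sum over levels
  have key3 : ∀ (G : Fin (M+1) → ℝ) (n : ℕ) (hn : n ≤ M),
      (∀ k : Fin (M+1), 1 < |(k.val : ℤ) - (n : ℤ)| → G k = 0) →
      ∑ k, G k = (if h : 1 ≤ n then G ⟨n-1, by omega⟩ else 0) + G ⟨n, by omega⟩
        + (if h : n < M then G ⟨n+1, by omega⟩ else 0) := by
    intro G n hn hz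
    by_cases h1 : 1 ≤ n <;> by_cases h2 : n < M <;> simp only [h1, h2, dif_pos, dif_neg,
      not_false_iff, dite_true, dite_false]
    · rw [← Finset.sum_subset
        (Finset.subset_univ ({⟨n-1, by omega⟩, ⟨n, by omega⟩, ⟨n+1, by omega⟩} :
          Finset (Fin (M+1))))
        (by intro x _ hx
            have hxl := x.isLt
            simp only [Finset.mem_insert, Finset.mem_singleton, Fin.ext_iff] at hx
            apply hz; rw [lt_abs]; omega)]
      rw [Finset.sum_insert (by
            simp only [Finset.mem_insert, Finset.mem_singleton, Fin.ext_iff, not_or]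
            omega),
        Finset.sum_insert (by
            simp only [Finset.mem_singleton, Fin.ext_iff]
            omega), Finset.sum_singleton, add_assoc]
    · rw [← Finset.sum_subset
        (Finset.subset_univ ({⟨n-1, by omega⟩, ⟨n, by omega⟩} : Finset (Fin (M+1))))
        (by intro x _ hx
            have hxl := x.isLt
            simp only [Finset.mem_insert, Finset.mem_singleton, Fin.ext_iff] at hx
            apply hz; rw [lt_abs]; omega)]
      rw [Finset.sum_insert (by
            simp only [Finset.mem_singleton, Fin.ext_iff]
            omega), Finset.sum_singleton, add_zero]
    · rw [← Finset.sum_subset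
        (Finset.subset_univ ({⟨n, by omega⟩, ⟨n+1, by omega⟩} : Finset (Fin (M+1))))
        (by intro x _ hx
            have hxl := x.isLt
            simp only [Finset.mem_insert, Finset.mem_singleton, Fin.ext_iff] at hx
            apply hz; rw [lt_abs]; omega)]
      rw [Finset.sum_insert (by
            simp only [Finset.mem_singleton, Fin.ext_iff]
            omega), Finset.sum_singleton, zero_add]
    · rw [← Finset.sum_subset
        (Finset.subset_univ ({⟨n, by omega⟩} : Finset (Fin (M+1))))
        (by intro x _ hx
            have hxl := x.isLt
            simp only [Finset.mem_singleton, Fin.ext_iff] at hx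
            apply hz; rw [lt_abs]; omega)]
      rw [Finset.sum_singleton, zero_add, add_zero]
  -- U with shifted index
  have hU' : ∀ (m : ℕ) (h1 : 1 ≤ m) (h2 : m ≤ M) (i j : Fin (l+1)),
      U (m-1) i j = Q (⟨m-1, by omega⟩, i) (⟨m, by omega⟩, j) := by
    intro m h1 h2 i j
    rw [hU (m-1) (by omega) i j]
    have : (⟨m-1+1, by omega⟩ : Fin (M+1)) = ⟨m, by omega⟩ := Fin.ext (by simp; omega)
    rw [this]
  -- balance equations
  have bal : ∀ (n : ℕ) (hn : n ≤ M) (j : Fin (l+1)),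
      (if 1 ≤ n then ∑ i, πv (n-1) i * U (n-1) i j else 0)
      + (∑ i, πv n i * W n i j)
      + (if n < M then ∑ i, πv (n+1) i * D (n+1) i j else 0) = 0 := by
    intro n hn j
    have h0 : Matrix.vecMul π Q ((⟨n, by omega⟩ : Fin (M+1)), j) = 0 := by rw [hπ]; rfl
    rw [Matrix.vecMul, dotProduct, Fintype.sum_prod_type] at h0
    rw [key3 (fun k => ∑ i, π (k, i) * Q (k, i) ((⟨n, by omega⟩ : Fin (M+1)), j)) n hn
      (by intro k hk
          refine Finset.sum_eq_zero (fun i _ => ?_)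
          rw [htri k ⟨n, by omega⟩ i j (by simpa using hk)]
          ring)] at h0
    have eW : ∑ i, πv n i * W n i j
        = ∑ i, π ((⟨n, by omega⟩ : Fin (M+1)), i)
            * Q ((⟨n, by omega⟩ : Fin (M+1)), i) ((⟨n, by omega⟩ : Fin (M+1)), j) :=
      Finset.sum_congr rfl (fun i _ => by rw [πv_eq n hn i, hW n hn i j])
    by_cases h1 : 1 ≤ n <;> by_cases h2 : n < M <;>
      simp only [h1, h2, dite_true, dite_false, if_true, if_false] at h0 ⊢
    · have eU : ∑ i, πv (n-1) i * U (n-1) i j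
          = ∑ i, π ((⟨n-1, by omega⟩ : Fin (M+1)), i)
              * Q ((⟨n-1, by omega⟩ : Fin (M+1)), i) ((⟨n, by omega⟩ : Fin (M+1)), j) :=
        Finset.sum_congr rfl (fun i _ => by rw [πv_eq (n-1) (by omega) i, hU' n h1 hn i j])
      have eD : ∑ i, πv (n+1) i * D (n+1) i j
          = ∑ i, π ((⟨n+1, by omega⟩ : Fin (M+1)), i)
              * Q ((⟨n+1, by omega⟩ : Fin (M+1)), i) ((⟨n, by omega⟩ : Fin (M+1)), j) :=
        Finset.sum_congr rfl (fun i _ => by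
          rw [πv_eq (n+1) (by omega) i, hD (n+1) (by omega) (by omega) i j]
          rfl)
      rw [eW, eU, eD]
      exact h0
    · have eU : ∑ i, πv (n-1) i * U (n-1) i j
          = ∑ i, π ((⟨n-1, by omega⟩ : Fin (M+1)), i)
              * Q ((⟨n-1, by omega⟩ : Fin (M+1)), i) ((⟨n, by omega⟩ : Fin (M+1)), j) :=
        Finset.sum_congr rfl (fun i _ => by rw [πv_eq (n-1) (by omega) i, hU' n h1 hn i j])
      rw [eW, eU]
      linarith [h0]
    · have eD : ∑ i, πv (n+1) i * D (n+1) i j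
          = ∑ i, π ((⟨n+1, by omega⟩ : Fin (M+1)), i)
              * Q ((⟨n+1, by omega⟩ : Fin (M+1)), i) ((⟨n, by omega⟩ : Fin (M+1)), j) :=
        Finset.sum_congr rfl (fun i _ => by
          rw [πv_eq (n+1) (by omega) i, hD (n+1) (by omega) (by omega) i j]
          rfl)
      rw [eW, eD]
      linarith [h0]
    · rw [eW]
      linarith [h0]
  -- row sums
  have rowsum : ∀ (k : ℕ) (hk : k ≤ M) (i : Fin (l+1)),
      (if 1 ≤ k then ∑ j, D k i j else 0) + (∑ j, W k i j)
      + (if k < M then ∑ j, U k i j else 0) = 0 := by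
    intro k hk i
    have h0 := hrow ((⟨k, by omega⟩ : Fin (M+1)), i)
    rw [Fintype.sum_prod_type] at h0
    rw [key3 (fun n => ∑ j, Q ((⟨k, by omega⟩ : Fin (M+1)), i) (n, j)) k hk
      (by intro n hn
          refine Finset.sum_eq_zero (fun j _ => ?_)
          apply htri
          rw [abs_sub_comm]
          simpa using hn)] at h0
    have eW : ∑ j, W k i j
        = ∑ j, Q ((⟨k, by omega⟩ : Fin (M+1)), i) ((⟨k, by omega⟩ : Fin (M+1)), j) :=
      Finset.sum_congr rfl (fun j _ => by rw [hW k hk i j])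
    by_cases h1 : 1 ≤ k <;> by_cases h2 : k < M <;>
      simp only [h1, h2, dite_true, dite_false, if_true, if_false] at h0 ⊢
    · have eD : ∑ j, D k i j
          = ∑ j, Q ((⟨k, by omega⟩ : Fin (M+1)), i) ((⟨k-1, by omega⟩ : Fin (M+1)), j) :=
        Finset.sum_congr rfl (fun j _ => by rw [hD k h1 hk i j])
      have eU : ∑ j, U k i j
          = ∑ j, Q ((⟨k, by omega⟩ : Fin (M+1)), i) ((⟨k+1, by omega⟩ : Fin (M+1)), j) :=
        Finset.sum_congr rfl (fun j _ => by rw [hU k h2 i j])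
      rw [eW, eD, eU]
      linarith [h0]
    · have eD : ∑ j, D k i j
          = ∑ j, Q ((⟨k, by omega⟩ : Fin (M+1)), i) ((⟨k-1, by omega⟩ : Fin (M+1)), j) :=
        Finset.sum_congr rfl (fun j _ => by rw [hD k h1 hk i j])
      rw [eW, eD]
      linarith [h0]
    · have eU : ∑ j, U k i j
          = ∑ j, Q ((⟨k, by omega⟩ : Fin (M+1)), i) ((⟨k+1, by omega⟩ : Fin (M+1)), j) :=
        Finset.sum_congr rfl (fun j _ => by rw [hU k h2 i j])
      rw [eW, eU]
      linarith [h0]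
    · rw [eW]
      linarith [h0]
  -- swap helper
  have swap : ∀ (v : Fin (l+1) → ℝ) (X : Matrix (Fin (l+1)) (Fin (l+1)) ℝ),
      ∑ j, ∑ i, v i * X i j = ∑ i, v i * ∑ j, X i j := by
    intro v X
    rw [Finset.sum_comm]
    exact Finset.sum_congr rfl (fun i _ => (Finset.mul_sum _ _ _).symm)
  -- cut equations
  have cut : ∀ (m : ℕ), m < M →
      ∑ j, ∑ i, πv (m+1) i * D (m+1) i j = ∑ j, ∑ i, πv m i * U m i j := by
    intro m
    induction m with
    | zero =>
      intro _
      have h1 : ∀ j, ∑ i, πv 0 i * W 0 i j + ∑ i, πv 1 i * D 1 i j = 0 := by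
        intro j
        have := bal 0 (by omega) j
        simpa [show ¬ (1:ℕ) ≤ 0 by omega, show 0 < M by omega] using this
      have hsum : ∑ j, ∑ i, πv 0 i * W 0 i j + ∑ j, ∑ i, πv 1 i * D 1 i j = 0 := by
        rw [← Finset.sum_add_distrib]
        exact Finset.sum_eq_zero (fun j _ => h1 j)
      have hw : ∑ j, ∑ i, πv 0 i * W 0 i j = - ∑ j, ∑ i, πv 0 i * U 0 i j := by
        rw [swap, swap, ← Finset.sum_neg_distrib]
        refine Finset.sum_congr rfl (fun i _ => ?_)
        have := rowsum 0 (by omega) i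
        simp only [show ¬ (1:ℕ) ≤ 0 by omega, show 0 < M by omega, if_true, if_false] at this
        have hwz : ∑ j, W 0 i j = - ∑ j, U 0 i j := by linarith
        rw [hwz]; ring
      linarith
    | succ k ih =>
      intro hk
      have ihc := ih (by omega)
      have h1 : ∀ j, ∑ i, πv k i * U k i j + ∑ i, πv (k+1) i * W (k+1) i j
          + ∑ i, πv (k+2) i * D (k+2) i j = 0 := by
        intro j
        have := bal (k+1) (by omega) j
        simpa [show 1 ≤ k+1 by omega, hk] using this
      have hsum : ∑ j, ∑ i, πv k i * U k i j + ∑ j, ∑ i, πv (k+1) i * W (k+1) i j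
          + ∑ j, ∑ i, πv (k+2) i * D (k+2) i j = 0 := by
        rw [← Finset.sum_add_distrib, ← Finset.sum_add_distrib]
        exact Finset.sum_eq_zero (fun j _ => h1 j)
      have hrs : ∑ j, ∑ i, πv (k+1) i * D (k+1) i j + ∑ j, ∑ i, πv (k+1) i * W (k+1) i j
          + ∑ j, ∑ i, πv (k+1) i * U (k+1) i j = 0 := by
        rw [swap, swap, swap, ← Finset.sum_add_distrib, ← Finset.sum_add_distrib]
        refine Finset.sum_eq_zero (fun i _ => ?_)
        have := rowsum (k+1) (by omega) i
        simp only [show 1 ≤ k+1 by omega, hk, if_true] at this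
        linear_combination (πv (k+1) i) * this
      linarith
  -- Ut against π equals D against π
  have hUtD : ∀ (m : ℕ), m ≤ M → ∀ j : Fin (l+1), ∑ i, πv m i * Ut m i j
      = (if m < M then ∑ i, πv (m+1) i * D (m+1) i j else 0) := by
    intro m hm j
    by_cases h2 : m < M
    · simp only [h2, if_true]
      by_cases hj : j = 0
      · subst hj
        have hl : ∑ i, πv m i * Ut m i 0 = ∑ i, πv m i * ∑ k, U m i k := by
          refine Finset.sum_congr rfl (fun i _ => ?_)
          rw [hUt m h2 i 0, if_pos rfl]
        rw [hl, ← swap, ← cut m h2]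
        rw [Finset.sum_eq_single 0]
        · intro b _ hb
          refine Finset.sum_eq_zero (fun i _ => ?_)
          rw [hDES (m+1) (by omega) (by omega) i b hb]; ring
        · intro hmem; exact absurd (Finset.mem_univ _) hmem
      · have hl : ∑ i, πv m i * Ut m i j = 0 := by
          refine Finset.sum_eq_zero (fun i _ => ?_)
          rw [hUt m h2 i j, if_neg hj]; ring
        have hr : ∑ i, πv (m+1) i * D (m+1) i j = 0 := by
          refine Finset.sum_eq_zero (fun i _ => ?_)
          rw [hDES (m+1) (by omega) (by omega) i j hj]; ring
        rw [hl, hr]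
    · simp only [h2, if_false]
      have hmM : m = M := by omega
      subst hmM
      refine Finset.sum_eq_zero (fun i _ => ?_)
      rw [hUtM]; simp
  -- key vector recursion input
  have keyE : ∀ (m : ℕ), 1 ≤ m → m ≤ M → ∀ j : Fin (l+1),
      ∑ i, πv (m-1) i * U (m-1) i j + ∑ i, πv m i * B m i j = 0 := by
    intro m h1 h2 j
    have hBj : ∑ i, πv m i * B m i j
        = ∑ i, πv m i * W m i j + ∑ i, πv m i * Ut m i j := by
      rw [← Finset.sum_add_distrib]
      refine Finset.sum_congr rfl (fun i _ => ?_)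
      rw [hB m h2]; simp [Matrix.add_apply]; ring
    rw [hBj, hUtD m h2 j]
    have := bal m h2 j
    simp only [h1, if_true] at this
    linarith
  -- the products
  set P : ℕ → Matrix (Fin (l+1)) (Fin (l+1)) ℝ :=
    fun m => ((List.range' 1 m).map R).prod with hP
  have hP0 : P 0 = 1 := by simp [hP]
  have hPsucc : ∀ m : ℕ, P (m+1) = P m * R (m+1) := by
    intro m
    simp only [hP, List.range'_concat, List.map_append, List.prod_append, List.map_cons,
      List.map_nil, List.prod_cons, List.prod_nil, one_mul, mul_one]
    rw [Nat.add_comm 1 m]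
  have rec1 : ∀ (m : ℕ), 1 ≤ m → m ≤ M → πv m = Matrix.vecMul (πv (m-1)) (R m) := by
    intro m h1 h2
    have hBu : IsUnit (B m).det := (Matrix.isUnit_iff_isUnit_det _).mp (hBinv m h1 h2)
    have hvB : Matrix.vecMul (πv m) (B m) = - Matrix.vecMul (πv (m-1)) (U (m-1)) := by
      funext j
      have := keyE m h1 h2 j
      simp only [Matrix.vecMul, dotProduct, Pi.neg_apply]
      linarith
    calc πv m = Matrix.vecMul (πv m) ((B m) * (B m)⁻¹) := by
          rw [Matrix.mul_nonsing_inv _ hBu, Matrix.vecMul_one]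
      _ = Matrix.vecMul (Matrix.vecMul (πv m) (B m)) ((B m)⁻¹) :=
          (Matrix.vecMul_vecMul _ _ _).symm
      _ = Matrix.vecMul (πv (m-1)) (R m) := by
          rw [hvB, hR m h1 h2]
          simp [Matrix.neg_vecMul, Matrix.vecMul_neg, Matrix.vecMul_vecMul]
  have recP : ∀ (m : ℕ), m ≤ M → πv m = Matrix.vecMul (πv 0) (P m) := by
    intro m
    induction m with
    | zero => intro _; rw [hP0, Matrix.vecMul_one]
    | succ k ih =>
      intro h
      rw [hPsucc, ← Matrix.vecMul_vecMul, ← ih (by omega)]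
      exact rec1 (k+1) (by omega) h
  -- normalization
  have hnorm0 : ∑ i, πv 0 i * S i = 1 := by
    have htot : ∑ m ∈ Finset.range (M+1), ∑ i, πv m i = 1 := by
      rw [← hnorm, Fintype.sum_prod_type]
      rw [← Fin.sum_univ_eq_sum_range (fun m => ∑ i, πv m i) (M+1)]
      refine Finset.sum_congr rfl (fun k _ => Finset.sum_congr rfl (fun i _ => ?_))
      rw [πv_eq k.val (by omega) i]
    have hrange : Finset.range (M+1) = insert 0 (Finset.Icc 1 M) := by
      ext x; simp [Finset.mem_range, Finset.mem_Icc, Finset.mem_insert]; omega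
    rw [hrange, Finset.sum_insert (by simp)] at htot
    calc ∑ i, πv 0 i * S i
        = ∑ i, (πv 0 i + ∑ m ∈ Finset.Icc 1 M, πv 0 i * ∑ j, P m i j) := by
          refine Finset.sum_congr rfl (fun i _ => ?_)
          rw [hS i, mul_add, mul_one, Finset.mul_sum]
      _ = ∑ i, πv 0 i + ∑ m ∈ Finset.Icc 1 M, ∑ i, πv 0 i * ∑ j, P m i j := by
          rw [Finset.sum_add_distrib, Finset.sum_comm]
      _ = ∑ i, πv 0 i + ∑ m ∈ Finset.Icc 1 M, ∑ j, πv m j := by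
          congr 1
          refine Finset.sum_congr rfl (fun m hm => ?_)
          have hmM : m ≤ M := (Finset.mem_Icc.mp hm).2
          rw [← swap]
          rw [recP m hmM]
          refine Finset.sum_congr rfl (fun j _ => ?_)
          simp [Matrix.vecMul, dotProduct]
      _ = 1 := htot
  -- π⁰ kills B⁰
  have hB0 : ∀ j : Fin (l+1), ∑ i, πv 0 i * B 0 i j = 0 := by
    intro j
    have hBj : ∑ i, πv 0 i * B 0 i j
        = ∑ i, πv 0 i * W 0 i j + ∑ i, πv 0 i * Ut 0 i j := by
      rw [← Finset.sum_add_distrib]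
      refine Finset.sum_congr rfl (fun i _ => ?_)
      rw [hB 0 (by omega)]; simp [Matrix.add_apply]; ring
    rw [hBj, hUtD 0 (by omega) j]
    have := bal 0 (by omega) j
    simpa [show ¬ (1:ℕ) ≤ 0 by omega, show 0 < M by omega] using this
  -- assemble
  set A : Matrix (Fin (l+1)) (Fin (l+1)) ℝ := Matrix.vecMulVec S e - B 0 with hA
  have hApi : Matrix.vecMul (πv 0) A = e := by
    funext j
    have h1 : Matrix.vecMul (πv 0) A j
        = ∑ i, πv 0 i * (S i * e j) - ∑ i, πv 0 i * B 0 i j := by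
      simp only [hA, Matrix.vecMul, dotProduct, Matrix.sub_apply,
        Matrix.vecMulVec_apply, mul_sub, Finset.sum_sub_distrib]
    rw [h1, hB0 j, sub_zero]
    have : ∑ i, πv 0 i * (S i * e j) = (∑ i, πv 0 i * S i) * e j := by
      rw [Finset.sum_mul]
      refine Finset.sum_congr rfl (fun i _ => ?_); ring
    rw [this, hnorm0, one_mul]
  have hAu : IsUnit A.det := (Matrix.isUnit_iff_isUnit_det _).mp hinv
  have hpi0 : πv 0 = Matrix.vecMul e A⁻¹ := by
    calc πv 0 = Matrix.vecMul (πv 0) (A * A⁻¹) := by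
          rw [Matrix.mul_nonsing_inv _ hAu, Matrix.vecMul_one]
      _ = Matrix.vecMul (Matrix.vecMul (πv 0) A) A⁻¹ := (Matrix.vecMul_vecMul _ _ _).symm
      _ = Matrix.vecMul e A⁻¹ := by rw [hApi]
  intro m hm
  have hgoal : (fun i => π (⟨m, by omega⟩, i)) = πv m :=
    funext fun i => (πv_eq m hm i).symm
  rw [hgoal, recP m hm, hpi0, Matrix.vecMul_vecMul]
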